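/- arXiv:math/0408082 — 4 statements merged into one kernel-verified Lean document; each statement's English description precedes it below -/
import Mathlib

section
/- For every real number x with 0 < |x| < π, the series \(\sum_{n\ge 0} B_{2n} (2x)^{2n}/(2n)!\) converges and its sum equals \(x\coth(x)\) (equivalently, \(\coth x = \sum_{n\ge 0} 2 B_{2n} (2x)^{2n-1}/(2n)!\)). -/
/-!
At `z = ix/π` the Mittag-Leffler expansion of `π cot πz` reads
`x coth x - 1 = ∑_{n ≥ 1} 2x² / (x² + π²n²)`.
For `|x| < π` every term is a geometric series in `q_n = (x/π)² / n²`, and the resulting double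
series converges absolutely. Summing it over `n` first produces the values `ζ(2k)`, which Euler's
formula expresses through `B_{2k}`.
-/

open Real
open scoped Nat

theorem Complex.ofReal_mul_I_mem_integerComplement {y : ℝ} (hy : y ≠ 0) :
    (y : ℂ) * Complex.I ∈ Complex.integerComplement := by
  rintro ⟨n, hn⟩
  have him := congrArg Complex.im hn
  simp only [Complex.intCast_im, Complex.mul_I_im, Complex.ofReal_re] at him
  exact hy him.symm

open Complex in
theorem hasSum_mul_coth_sub_one {x : ℝ} (hx : x ≠ 0) :
    HasSum (fun n : ℕ => 2 * x ^ 2 / (x ^ 2 + π ^ 2 * ((n : ℝ) + 1) ^ 2))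
      (x * (Real.cosh x / Real.sinh x) - 1) := by
  set z : ℂ := (x / π : ℝ) * I
  have hz : z ∈ integerComplement :=
    ofReal_mul_I_mem_integerComplement (div_ne_zero hx pi_ne_zero)
  have hterm (n : ℕ) :
      z * cotTerm z n = ((2 * x ^ 2 / (x ^ 2 + π ^ 2 * ((n : ℝ) + 1) ^ 2) : ℝ) : ℂ) := by
    have hz2 : z ^ 2 = ((-(x / π) ^ 2 : ℝ) : ℂ) := by simp [z, mul_pow]
    have hreal : 2 * (-(x / π) ^ 2) / (-(x / π) ^ 2 - ((n : ℝ) + 1) ^ 2)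
        = 2 * x ^ 2 / (x ^ 2 + π ^ 2 * ((n : ℝ) + 1) ^ 2) := by
      have hπ := pi_ne_zero
      have hne : -(x / π) ^ 2 - ((n : ℝ) + 1) ^ 2 ≠ 0 := by
        rw [← neg_add']; exact neg_ne_zero.mpr (by positivity)
      rw [div_eq_div_iff hne (by positivity)]
      field_simp
      ring
    calc z * cotTerm z n = 2 * z ^ 2 / (z ^ 2 - ((n : ℂ) + 1) ^ 2) := by
          rw [cotTerm_identity hz]; ring
      _ = _ := by rw [hz2, ← hreal]; push_cast; rfl
  have hval :
      z * (π * cot (π * z) - 1 / z) = ((x * (Real.cosh x / Real.sinh x) - 1 : ℝ) : ℂ) := by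
    have hπz : (π : ℂ) * z = x * I := by
      simp only [z, ofReal_div]; field_simp
    have hsinh : (Real.sinh x : ℂ) ≠ 0 := by exact_mod_cast Real.sinh_ne_zero.mpr hx
    rw [mul_sub, ← mul_assoc, mul_comm z, hπz, Complex.cot_eq_cos_div_sin, cos_mul_I, sin_mul_I,
      mul_one_div_cancel (integerComplement.ne_zero hz)]
    push_cast
    field_simp
  have h := (summable_cotTerm hz).hasSum.mul_left z
  rw [show ∑' n, cotTerm z n = π * cot (π * z) - 1 / z from (cot_series_rep' hz).symm,
    hval] at h
  simp only [hterm] at h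
  exact hasSum_ofReal.mp h

theorem hasSum_two_mul_neg_one_pow_mul_pow_succ {q : ℝ} (hq : |q| < 1) :
    HasSum (fun k : ℕ => 2 * (-1) ^ k * q ^ (k + 1)) (2 * q / (1 + q)) := by
  have h := (hasSum_geometric_of_abs_lt_one (r := -q) (by rwa [abs_neg])).mul_left (2 * q)
  rw [sub_neg_eq_add, ← div_eq_mul_inv] at h
  refine h.congr_fun fun k => ?_
  rw [neg_pow, pow_succ]
  ring

theorem hasSum_one_div_nat_succ_pow_two_mul {k : ℕ} (hk : k ≠ 0) :
    HasSum (fun n : ℕ => 1 / ((n : ℝ) + 1) ^ (2 * k))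
      ((-1 : ℝ) ^ (k + 1) * (2 : ℝ) ^ (2 * k - 1) * π ^ (2 * k) *
        bernoulli (2 * k) / (2 * k)!) := by
  have h := hasSum_zeta_nat hk
  -- the `n = 0` term of `hasSum_zeta_nat` is the junk value `1 / 0 = 0`
  rw [← hasSum_nat_add_iff' 1] at h
  simpa [hk] using h

theorem hasSum_bernoulli_mul_pow_div_factorial (x : ℝ) (k : ℕ) :
    HasSum (fun n : ℕ => 2 * (-1) ^ k * ((x / π) ^ 2 * (1 / ((n : ℝ) + 1) ^ 2)) ^ (k + 1))
      (bernoulli (2 * (k + 1)) * (2 * x) ^ (2 * (k + 1)) / (2 * (k + 1))!) := by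
  have h := (hasSum_one_div_nat_succ_pow_two_mul k.add_one_ne_zero).mul_left
    (2 * (-1) ^ k * (x / π) ^ (2 * (k + 1)))
  have hval : (bernoulli (2 * (k + 1)) : ℝ) * (2 * x) ^ (2 * (k + 1)) / (2 * (k + 1))! =
      2 * (-1) ^ k * (x / π) ^ (2 * (k + 1)) * ((-1) ^ (k + 1 + 1) * 2 ^ (2 * (k + 1) - 1) *
        π ^ (2 * (k + 1)) * bernoulli (2 * (k + 1)) / (2 * (k + 1))!) := by
    have hsign : (-1 : ℝ) ^ k * (-1) ^ (k + 1 + 1) = 1 := by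
      rw [← pow_add]; exact Even.neg_one_pow ⟨k + 1, by ring⟩
    rw [show 2 * (k + 1) - 1 = 2 * k + 1 by omega, div_pow, mul_pow]
    have hπ := pi_ne_zero
    field_simp
    linear_combination
      (-2 ^ (2 * (k + 1)) * x ^ (2 * (k + 1)) * (bernoulli (2 * (k + 1)) : ℝ)) * hsign
  rw [hval]
  refine h.congr_fun fun n => ?_
  rw [mul_pow, ← pow_mul, one_div_pow, ← pow_mul]
  ring

theorem one_div_nat_add_one_sq_le_one (n : ℕ) : 1 / ((n : ℝ) + 1) ^ 2 ≤ 1 :=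
  div_le_one_of_le₀ (one_le_pow₀ (le_add_of_nonneg_left n.cast_nonneg)) (by positivity)

theorem summable_two_mul_neg_one_pow_mul_pow_succ {r : ℝ} (hr₀ : 0 ≤ r) (hr₁ : r < 1) :
    Summable fun p : ℕ × ℕ =>
      2 * (-1 : ℝ) ^ p.2 * (r * (1 / ((p.1 : ℝ) + 1) ^ 2)) ^ (p.2 + 1) := by
  have hu₀ (n : ℕ) : 0 ≤ 1 / ((n : ℝ) + 1) ^ 2 := by positivity
  have hu : Summable fun n : ℕ => 1 / ((n : ℝ) + 1) ^ 2 := by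
    exact_mod_cast (summable_nat_add_iff 1).mpr (Real.summable_one_div_nat_pow.mpr one_lt_two)
  have hgeom : Summable fun k : ℕ => 2 * r ^ (k + 1) :=
    ((summable_geometric_of_lt_one hr₀ hr₁).mul_left r).mul_left 2 |>.congr fun k => by ring
  refine .of_norm_bounded (hu.mul_of_nonneg hgeom (fun n => hu₀ n) fun k => by positivity) ?_
  rintro ⟨n, k⟩
  rw [norm_mul, norm_mul, norm_pow, norm_neg, norm_one, one_pow, mul_one, Real.norm_two,
    norm_pow, Real.norm_of_nonneg (mul_nonneg hr₀ (hu₀ n)), mul_pow]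
  have hle := mul_le_mul_of_nonneg_left
    (pow_le_of_le_one (hu₀ n) (one_div_nat_add_one_sq_le_one n) k.add_one_ne_zero)
    (pow_nonneg hr₀ (k + 1))
  dsimp only
  linarith

theorem hasSum_bernoulli_succ_mul_coth {x : ℝ} (hx₀ : x ≠ 0) (hx : |x| < π) :
    HasSum (fun k : ℕ =>
        (bernoulli (2 * (k + 1)) : ℝ) * (2 * x) ^ (2 * (k + 1)) / (2 * (k + 1))!)
      (x * (cosh x / sinh x) - 1) := by
  have hr : (x / π) ^ 2 < 1 := by
    rw [div_pow, div_lt_one (by positivity)]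
    exact sq_lt_sq.mpr (by rwa [abs_of_pos pi_pos])
  set f : ℕ × ℕ → ℝ :=
    fun p => 2 * (-1) ^ p.2 * ((x / π) ^ 2 * (1 / ((p.1 : ℝ) + 1) ^ 2)) ^ (p.2 + 1)
  have hf : HasSum f (∑' p, f p) :=
    (summable_two_mul_neg_one_pow_mul_pow_succ (sq_nonneg _) hr).hasSum
  have hrows :
      HasSum (fun n : ℕ => 2 * x ^ 2 / (x ^ 2 + π ^ 2 * ((n : ℝ) + 1) ^ 2)) (∑' p, f p) := by
    refine hf.prod_fiberwise fun n => ?_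
    have hq : |(x / π) ^ 2 * (1 / ((n : ℝ) + 1) ^ 2)| < 1 := by
      rw [abs_of_nonneg (by positivity)]
      exact mul_lt_one_of_nonneg_of_lt_one_left (sq_nonneg _) hr
        (one_div_nat_add_one_sq_le_one n)
    have h := hasSum_two_mul_neg_one_pow_mul_pow_succ hq
    have hπ := pi_ne_zero
    rwa [show 2 * ((x / π) ^ 2 * (1 / ((n : ℝ) + 1) ^ 2)) /
        (1 + (x / π) ^ 2 * (1 / ((n : ℝ) + 1) ^ 2)) =
          2 * x ^ 2 / (x ^ 2 + π ^ 2 * ((n : ℝ) + 1) ^ 2) by field_simp; ring] at h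
  have hcols := ((Equiv.prodComm ℕ ℕ).hasSum_iff.mpr hf).prod_fiberwise
    fun k => hasSum_bernoulli_mul_pow_div_factorial x k
  rwa [hrows.unique (hasSum_mul_coth_sub_one hx₀)] at hcols

theorem hasSum_bernoulli_coth' (x : ℝ) (hx : 0 < |x|) (hx' : |x| < π) :
    HasSum (fun n : ℕ => (bernoulli (2 * n) : ℝ) * (2 * x) ^ (2 * n) / (Nat.factorial (2 * n) : ℝ))
      (x * (Real.cosh x / Real.sinh x)) := by
  rw [← hasSum_nat_add_iff' 1]
  simpa using hasSum_bernoulli_succ_mul_coth (abs_pos.mp hx) hx'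
end

section
/- For every real number x with 0 < |x| < π, the series \(\sum_{n\ge 0} (-1)^n B_{2n} (2x)^{2n}/(2n)!\) converges and its sum equals \(x\cot(x)\). -/
/-!
Multiplying the Bernoulli series `∑ Bₙ zⁿ / n!` by the exponential series of `e^z - 1` gives
the series of `z` (this is `bernoulliPowerSeries_mul_exp_sub_one`), and by Euler's formula
`|B₂ₖ| / (2k)! = 2 ζ(2k) / (2π)^(2k)` both series converge absolutely for `|z| < 2π`; hence
the Bernoulli series sums to `z / (e^z - 1)` there. The odd Bernoulli numbers vanish except
`B₁ = -1/2`, so the even part sums to `z / (e^z - 1) + z / 2`, which at `z = 2ix` is `x cot x`.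
-/

open Real
open scoped Complex

open PowerSeries in
theorem PowerSeries.tsum_mul_tsum_eq_tsum_coeff_mul {R A : Type*} [CommRing R] [NormedRing A]
    [CompleteSpace A] [Algebra R A] (φ ψ : R⟦X⟧) (z : A)
    (hφ : Summable fun n ↦ ‖algebraMap R A (coeff n φ) * z ^ n‖)
    (hψ : Summable fun n ↦ ‖algebraMap R A (coeff n ψ) * z ^ n‖) :
    (∑' n, algebraMap R A (coeff n φ) * z ^ n) * (∑' n, algebraMap R A (coeff n ψ) * z ^ n) =
      ∑' n, algebraMap R A (coeff n (φ * ψ)) * z ^ n := by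
  rw [tsum_mul_tsum_eq_tsum_sum_antidiagonal_of_summable_norm hφ hψ]
  congr 1 with n
  rw [coeff_mul, map_sum, Finset.sum_mul]
  refine Finset.sum_congr rfl fun p hp ↦ ?_
  rw [← Finset.HasAntidiagonal.mem_antidiagonal.mp hp, pow_add, map_mul, mul_assoc,
    ← mul_assoc (z ^ p.1), ← Algebra.commutes, mul_assoc, mul_assoc]

theorem hasSum_zeta_nat_abs_bernoulli {k : ℕ} (hk : k ≠ 0) :
    HasSum (fun n : ℕ ↦ 1 / (n : ℝ) ^ (2 * k))
      ((2 * π) ^ (2 * k) * |(bernoulli (2 * k) : ℝ)| / (2 * (2 * k).factorial)) := by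
  have h := hasSum_zeta_nat hk
  convert h using 1
  rw [← abs_of_nonneg (h.nonneg fun n ↦ by positivity), abs_div, abs_mul, abs_mul, abs_mul,
    abs_pow, abs_neg, abs_one, one_pow, one_mul, abs_pow, abs_pow, abs_two, abs_of_pos pi_pos,
    Nat.abs_cast, mul_pow]
  obtain ⟨m, hm⟩ : ∃ m, 2 * k = m + 1 := ⟨2 * k - 1, by omega⟩
  rw [hm, Nat.add_sub_cancel, pow_succ]
  field_simp

-- `π ^ 2 / 3 = 2 ζ(2)` bounds the even terms; it also covers `B₁` because `π ≥ 3`.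
theorem abs_bernoulli_div_factorial_le (n : ℕ) :
    |(bernoulli n : ℝ)| / n.factorial ≤ π ^ 2 / 3 / (2 * π) ^ n := by
  obtain ⟨k, rfl | rfl⟩ := Nat.even_or_odd' n
  · rcases eq_or_ne k 0 with rfl | hk
    · norm_num
      nlinarith [pi_gt_three]
    have hle : (2 * π) ^ (2 * k) * |(bernoulli (2 * k) : ℝ)| / (2 * (2 * k).factorial) ≤
        π ^ 2 / 6 := by
      refine hasSum_le (fun n ↦ ?_) (hasSum_zeta_nat_abs_bernoulli hk) hasSum_zeta_two
      rcases n.eq_zero_or_pos with rfl | hn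
      · simp [hk]
      · exact one_div_pow_le_one_div_pow_of_le (by exact_mod_cast hn) (by omega)
    rw [div_le_div_iff₀ (by positivity) (by positivity)]
    rw [div_le_iff₀ (by positivity)] at hle
    linarith
  · rcases eq_or_ne k 0 with rfl | hk
    · norm_num [bernoulli_one]
      rw [le_div_iff₀ (by positivity)]
      nlinarith [pi_gt_three]
    · rw [bernoulli_eq_zero_of_odd (odd_two_mul_add_one k) (by omega)]
      norm_num
      positivity

theorem summable_norm_bernoulli_mul_pow_div_factorial {z : ℂ} (hz : ‖z‖ < 2 * π) :
    Summable fun n ↦ ‖(bernoulli n : ℂ) * z ^ n / n.factorial‖ := by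
  have hr : ‖z‖ / (2 * π) < 1 := (div_lt_one (by positivity)).2 hz
  refine .of_nonneg_of_le (fun n ↦ norm_nonneg _) (fun n ↦ ?_)
    ((summable_geometric_of_lt_one (by positivity) hr).mul_left (π ^ 2 / 3))
  calc ‖(bernoulli n : ℂ) * z ^ n / n.factorial‖
      = |(bernoulli n : ℝ)| / n.factorial * ‖z‖ ^ n := by
        rw [norm_div, norm_mul, norm_pow, Complex.norm_natCast, ← Complex.ofReal_ratCast,
          Complex.norm_real, Real.norm_eq_abs]
        ring
    _ ≤ π ^ 2 / 3 / (2 * π) ^ n * ‖z‖ ^ n := by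
        gcongr ?_ * _
        exact abs_bernoulli_div_factorial_le n
    _ = π ^ 2 / 3 * (‖z‖ / (2 * π)) ^ n := by rw [div_pow]; ring

section

open PowerSeries

theorem hasSum_coeff_exp_sub_one_mul_pow (z : ℂ) :
    HasSum (fun n ↦ algebraMap ℚ ℂ (coeff n (exp ℚ - 1)) * z ^ n) (cexp z - 1) := by
  have hterm : ∀ n, algebraMap ℚ ℂ (coeff n (exp ℚ - 1)) * z ^ n =
      z ^ n / n.factorial - if n = 0 then 1 else 0 := fun n ↦ by
    rcases eq_or_ne n 0 with rfl | hn
    · simp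
    · simp [coeff_one, hn, div_eq_inv_mul]
  rw [funext hterm, Complex.exp_eq_exp_ℂ]
  exact (NormedSpace.expSeries_div_hasSum_exp z).sub (hasSum_ite_eq 0 1)

theorem hasSum_bernoulli_mul_pow_div_factorial_s4 {z : ℂ} (hz : ‖z‖ < 2 * π)
    (hz1 : cexp z ≠ 1) :
    HasSum (fun n ↦ (bernoulli n : ℂ) * z ^ n / n.factorial) (z / (cexp z - 1)) := by
  have hB : ∀ n, algebraMap ℚ ℂ (coeff n (bernoulliPowerSeries ℚ)) * z ^ n =
      bernoulli n * z ^ n / n.factorial := fun n ↦ by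
    simp [bernoulliPowerSeries, div_mul_eq_mul_div]
  have hX : ∀ n, algebraMap ℚ ℂ (coeff n (X : ℚ⟦X⟧)) * z ^ n = if n = 1 then z else 0 :=
    fun n ↦ by rcases eq_or_ne n 1 with rfl | hn <;> simp [coeff_X, *]
  have hBs := summable_norm_bernoulli_mul_pow_div_factorial hz
  have hE := hasSum_coeff_exp_sub_one_mul_pow z
  have key := tsum_mul_tsum_eq_tsum_coeff_mul (bernoulliPowerSeries ℚ) (exp ℚ - 1) z
    (by simpa only [hB] using hBs) (summable_norm_iff.2 hE.summable)
  rw [bernoulliPowerSeries_mul_exp_sub_one, hE.tsum_eq, funext hX, tsum_ite_eq, funext hB,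
    ← eq_div_iff (sub_ne_zero.2 hz1)] at key
  exact key ▸ hBs.of_norm.hasSum

end

theorem hasSum_bernoulli_two_mul_mul_pow_div_factorial {z : ℂ} (hz : ‖z‖ < 2 * π)
    (hz1 : cexp z ≠ 1) :
    HasSum (fun k ↦ (bernoulli (2 * k) : ℂ) * z ^ (2 * k) / (2 * k).factorial)
      (z / (cexp z - 1) + z / 2) := by
  set f : ℕ → ℂ := fun n ↦ (bernoulli n : ℂ) * z ^ n / n.factorial
  have hf : HasSum (Function.update f 1 0) (0 - f 1 + z / (cexp z - 1)) :=
    (hasSum_bernoulli_mul_pow_div_factorial_s4 hz hz1).update 1 0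
  rw [show 0 - f 1 + z / (cexp z - 1) = z / (cexp z - 1) + z / 2 by
    simp [f, bernoulli_one]; ring] at hf
  have hodd : ∀ n ∉ Set.range (2 * ·), Function.update f 1 0 n = 0 := by
    intro n hrange
    have hn : Odd n := Nat.not_even_iff_odd.1 fun ⟨k, hk⟩ ↦ hrange ⟨k, by dsimp; omega⟩
    rcases eq_or_ne n 1 with rfl | hn1
    · simp
    · simp [Function.update_of_ne hn1, f,
        bernoulli_eq_zero_of_odd hn (lt_of_le_of_ne hn.pos hn1.symm)]
  convert ((mul_right_injective₀ two_ne_zero).hasSum_iff hodd).2 hf using 2 with k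
  simp [f]

namespace Complex

theorem exp_two_mul_I_mul_sub_one (z : ℂ) :
    cexp (2 * I * z) - 1 = 2 * I * sin z * cexp (I * z) := by
  have hsq : cexp (2 * I * z) = cexp (I * z) ^ 2 := by
    rw [← exp_nat_mul]; ring_nf
  have hneg : cexp (-z * I) = (cexp (I * z))⁻¹ := by
    rw [← exp_neg]; ring_nf
  rw [sin, hsq, hneg, mul_comm z I]
  field_simp
  linear_combination (cexp (I * z) ^ 2 - 1) * I_sq

theorem exp_two_mul_I_mul_ne_one {z : ℂ} (hz : sin z ≠ 0) : cexp (2 * I * z) ≠ 1 := by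
  rw [← sub_ne_zero, exp_two_mul_I_mul_sub_one]
  exact mul_ne_zero (mul_ne_zero (by simp) hz) (exp_ne_zero _)

theorem mul_cot_eq_div_exp_sub_one_add {z : ℂ} (hz : sin z ≠ 0) :
    z * cot z = 2 * I * z / (cexp (2 * I * z) - 1) + 2 * I * z / 2 := by
  have hexp : cexp (2 * I * z) - 1 ≠ 0 := sub_ne_zero.2 (exp_two_mul_I_mul_ne_one hz)
  have hexp' : 1 - cexp (2 * I * z) ≠ 0 := by rwa [← neg_sub, neg_ne_zero]
  rw [cot_eq_exp_ratio]
  generalize cexp (2 * I * z) = w at hexp hexp' ⊢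
  field_simp
  linear_combination (z * w ^ 2 - z) * I_sq

end Complex

theorem hasSum_bernoulli_cot (x : ℝ) (hx : 0 < |x|) (hx' : |x| < π) :
    HasSum
      (fun n : ℕ =>
        (-1 : ℝ) ^ n * (bernoulli (2 * n) : ℝ) * (2 * x) ^ (2 * n) / (Nat.factorial (2 * n) : ℝ))
      (x * Real.cot x) := by
  have hsin : Complex.sin x ≠ 0 := by
    rw [← Complex.ofReal_sin, Complex.ofReal_ne_zero, Ne,
      sin_eq_zero_iff_of_lt_of_lt (neg_lt_of_abs_lt hx') (lt_of_abs_lt hx')]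
    exact abs_pos.1 hx
  have hz : ‖2 * Complex.I * x‖ < 2 * π := by
    rw [norm_mul, norm_mul, Complex.norm_I, Complex.norm_real, Complex.norm_two, Real.norm_eq_abs]
    linarith
  have h := hasSum_bernoulli_two_mul_mul_pow_div_factorial hz
    (Complex.exp_two_mul_I_mul_ne_one hsin)
  rw [← Complex.mul_cot_eq_div_exp_sub_one_add hsin, ← Complex.ofReal_cot,
    ← Complex.ofReal_mul] at h
  refine Complex.hasSum_ofReal.1 (h.congr_fun fun k ↦ ?_)
  have hpow : (2 * Complex.I * x) ^ (2 * k) = (-1) ^ k * (2 * x) ^ (2 * k) := by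
    rw [pow_mul, pow_mul, ← mul_pow]
    congr 1
    linear_combination (2 * (x : ℂ)) ^ 2 * Complex.I_sq
  push_cast
  rw [hpow]
  ring
end

section
/- For every real number x with |x| < π/2, the series \(\sum_{n\ge 1} 2(4^n - 1) B_{2n} (2x)^{2n-1}/(2n)!\) converges and its sum equals \(\tanh(x)\). -/
/-!
With `B(t) = t / (eᵗ - 1)` the Bernoulli generating function, `2 (B(2t) - B(t)) = -2t / (eᵗ + 1)`,
so the power series `∑ cₘ Xᵐ` with `cₘ = 2 (2ᵐ⁺¹ - 1) Bₘ₊₁ / (m + 1)!` satisfies the formal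
identity `(e^X + 1) ∑ cₘ Xᵐ = -2`. Euler's evaluation of `ζ(2k)` in terms of `B₂ₖ`, together with
`ζ(2k) ≤ ζ(2) < 2`, gives `|cₘ| ≤ 8 / πᵐ⁺¹`, so the series converges absolutely for `|y| < π`, and
the Cauchy product with the exponential series turns the formal identity into
`∑ cₘ yᵐ = -2 / (eʸ + 1) = tanh (y / 2) - 1`. Apart from `c₀ = -1` only odd `m` contribute;
put `y = 2x`.
-/

open Real PowerSeries
open scoped Nat

/-- The coefficient of `yᵐ` in `tanh (y / 2) - 1 = -2 / (eʸ + 1)`. -/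
def tanhCoeff (m : ℕ) : ℚ := 2 * (2 ^ (m + 1) - 1) * bernoulli (m + 1) / (m + 1)!

theorem tanhCoeff_zero : tanhCoeff 0 = -1 := by
  norm_num [tanhCoeff, bernoulli_one]

theorem tanhCoeff_eq_zero {m : ℕ} (hm : Even m) (h0 : m ≠ 0) : tanhCoeff m = 0 := by
  simp [tanhCoeff, bernoulli_eq_zero_of_odd hm.add_one (by omega)]

section Formal

variable (A : Type*) [CommRing A] [Algebra ℚ A]

noncomputable def tanhSeries : A⟦X⟧ := mk fun m => algebraMap ℚ A (tanhCoeff m)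

theorem X_mul_tanhSeries :
    X * tanhSeries A = 2 * (rescale 2 (bernoulliPowerSeries A) - bernoulliPowerSeries A) := by
  ext n
  rw [← map_ofNat C 2, coeff_C_mul, map_sub, coeff_rescale]
  cases n with
  | zero => simp [bernoulliPowerSeries]
  | succ m =>
    rw [coeff_succ_X_mul]
    have hcoeff : tanhCoeff m = 2 * (2 ^ (m + 1) * (bernoulli (m + 1) / (m + 1)!) -
        bernoulli (m + 1) / (m + 1)!) := by rw [tanhCoeff]; ring
    simp only [tanhSeries, bernoulliPowerSeries, coeff_mk, hcoeff, map_mul, map_sub, map_pow,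
      map_ofNat]

theorem exp_add_one_mul_tanhSeries [IsDomain A] : (exp A + 1) * tanhSeries A = -2 := by
  have hB := bernoulliPowerSeries_mul_exp_sub_one A
  have hB₂ := congrArg (rescale (2 : A)) hB
  have hexp₂ : rescale (2 : A) (exp A) = exp A ^ 2 := by
    rw [exp_pow_eq_rescale_exp, Nat.cast_ofNat]
  rw [map_mul, map_sub, map_one, rescale_X, hexp₂, map_ofNat] at hB₂
  have hexp_sub_one : exp A - 1 ≠ 0 := fun h => by simpa using congrArg (coeff 1) h
  refine mul_left_cancel₀ (mul_ne_zero X_ne_zero hexp_sub_one) ?_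
  linear_combination (exp A ^ 2 - 1) * X_mul_tanhSeries A + 2 * hB₂ - 2 * (exp A + 1) * hB

end Formal

theorem tsum_one_div_nat_pow_le_two {p : ℕ} (hp : 2 ≤ p) :
    ∑' n : ℕ, 1 / (n : ℝ) ^ p ≤ 2 :=
  calc ∑' n : ℕ, 1 / (n : ℝ) ^ p ≤ ∑' n : ℕ, 1 / (n : ℝ) ^ 2 := by
        refine (Real.summable_one_div_nat_pow.2 (by omega)).tsum_le_tsum (fun n => ?_)
          hasSum_zeta_two.summable
        rcases n.eq_zero_or_pos with rfl | hn
        · simp [show p ≠ 0 by omega]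
        · gcongr
          exact_mod_cast hn
    _ = π ^ 2 / 6 := hasSum_zeta_two.tsum_eq
    _ ≤ 2 := by nlinarith [pi_lt_d2, pi_pos]

theorem abs_bernoulli_two_mul_div_factorial_le {k : ℕ} (hk : k ≠ 0) :
    |(bernoulli (2 * k) : ℝ)| / (2 * k)! ≤ 4 / (2 * π) ^ (2 * k) := by
  have hζ := hasSum_zeta_nat hk
  have hζ_le := tsum_one_div_nat_pow_le_two (p := 2 * k) (by omega)
  have hζ_nonneg : 0 ≤ ∑' n : ℕ, 1 / (n : ℝ) ^ (2 * k) := tsum_nonneg fun n => by positivity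
  rw [← abs_of_nonneg hζ_nonneg, hζ.tsum_eq] at hζ_le
  simp only [abs_div, abs_mul, abs_pow, abs_neg, abs_one, one_pow, one_mul, abs_two,
    abs_of_pos pi_pos, Nat.abs_cast] at hζ_le
  have hfac : (0 : ℝ) < (2 * k)! := by positivity
  have h2k : (2 : ℝ) ^ (2 * k) = 2 * 2 ^ (2 * k - 1) := (mul_pow_sub_one (by omega) _).symm
  rw [div_le_div_iff₀ hfac (by positivity)]
  rw [div_le_iff₀ hfac] at hζ_le
  calc |(bernoulli (2 * k) : ℝ)| * (2 * π) ^ (2 * k)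
      = 2 * (2 ^ (2 * k - 1) * π ^ (2 * k) * |(bernoulli (2 * k) : ℝ)|) := by
        rw [mul_pow, h2k]; ring
    _ ≤ 4 * (2 * k)! := by linarith

theorem abs_tanhCoeff_le (m : ℕ) : |(tanhCoeff m : ℝ)| ≤ 8 / π ^ (m + 1) := by
  rcases Nat.even_or_odd' m with ⟨k, rfl | rfl⟩
  · rcases eq_or_ne k 0 with rfl | hk
    · rw [tanhCoeff_zero, le_div_iff₀ (by positivity)]
      norm_num
      linarith [pi_le_four]
    · rw [tanhCoeff_eq_zero (even_two_mul k) (by omega), Rat.cast_zero, abs_zero]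
      positivity
  · have hB := abs_bernoulli_two_mul_div_factorial_le k.succ_ne_zero
    have h1 : (1 : ℝ) ≤ 2 ^ (2 * (k + 1)) := one_le_pow₀ one_le_two
    rw [show 2 * k + 1 + 1 = 2 * (k + 1) by ring]
    calc |(tanhCoeff (2 * k + 1) : ℝ)|
        = 2 * (2 ^ (2 * (k + 1)) - 1) * (|(bernoulli (2 * (k + 1)) : ℝ)| / (2 * (k + 1))!) := by
          simp only [tanhCoeff, show 2 * k + 1 + 1 = 2 * (k + 1) by ring]
          push_cast
          rw [abs_div, abs_mul, abs_mul, abs_two, abs_of_nonneg (sub_nonneg.2 h1), Nat.abs_cast]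
          ring
      _ ≤ 2 * 2 ^ (2 * (k + 1)) * (4 / (2 * π) ^ (2 * (k + 1))) := by
          gcongr
          linarith
      _ = 8 / π ^ (2 * (k + 1)) := by
          rw [mul_pow]
          field_simp
          ring

theorem summable_norm_tanhCoeff_mul_pow {y : ℝ} (hy : |y| < π) :
    Summable fun m => ‖(tanhCoeff m : ℝ) * y ^ m‖ := by
  have hq : |y| / π < 1 := (div_lt_one pi_pos).2 hy
  refine ((summable_geometric_of_lt_one (by positivity) hq).mul_left (8 / π)).of_nonneg_of_le
    (fun _ => norm_nonneg _) fun m => ?_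
  calc ‖(tanhCoeff m : ℝ) * y ^ m‖ = |(tanhCoeff m : ℝ)| * |y| ^ m := by
        rw [norm_mul, norm_pow, Real.norm_eq_abs, Real.norm_eq_abs]
    _ ≤ 8 / π ^ (m + 1) * |y| ^ m := by gcongr; exact abs_tanhCoeff_le m
    _ = 8 / π * (|y| / π) ^ m := by rw [div_pow, pow_succ]; field_simp

open Finset in
theorem PowerSeries.hasSum_coeff_mul_mul_pow {R : Type*} [NormedCommRing R] [CompleteSpace R]
    {f g : R⟦X⟧} {x : R} (hf : Summable fun n => ‖coeff n f * x ^ n‖)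
    (hg : Summable fun n => ‖coeff n g * x ^ n‖) :
    HasSum (fun n => coeff n (f * g) * x ^ n)
      ((∑' n, coeff n f * x ^ n) * ∑' n, coeff n g * x ^ n) := by
  have hcoeff (n : ℕ) : coeff n (f * g) * x ^ n =
      ∑ kl ∈ antidiagonal n, coeff kl.1 f * x ^ kl.1 * (coeff kl.2 g * x ^ kl.2) := by
    rw [coeff_mul, sum_mul]
    refine sum_congr rfl fun kl hkl => ?_
    rw [← mem_antidiagonal.1 hkl, pow_add]
    ring
  simp_rw [hcoeff, tsum_mul_tsum_eq_tsum_sum_antidiagonal_of_summable_norm hf hg]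
  exact (summable_norm_sum_mul_antidiagonal_of_summable_norm hf hg).of_norm.hasSum

theorem PowerSeries.coeff_exp_mul_pow {K : Type*} [Field K] [CharZero K] (n : ℕ) (y : K) :
    coeff n (exp K) * y ^ n = y ^ n / n ! := by
  rw [coeff_exp, map_div₀, map_one, map_natCast, one_div_mul_eq_div]

theorem hasSum_tanhCoeff_mul_pow {y : ℝ} (hy : |y| < π) :
    HasSum (fun m => (tanhCoeff m : ℝ) * y ^ m) (-2 / (Real.exp y + 1)) := by
  have hT (m : ℕ) : coeff m (tanhSeries ℝ) = tanhCoeff m := by simp [tanhSeries]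
  have hS := summable_norm_tanhCoeff_mul_pow hy
  have hE : Summable fun n => ‖coeff n (exp ℝ) * y ^ n‖ := by
    simpa only [coeff_exp_mul_pow, norm_div, norm_pow, Real.norm_eq_abs, Nat.abs_cast]
      using Real.summable_pow_div_factorial |y|
  have hexp : ∑' n, coeff n (exp ℝ) * y ^ n = Real.exp y := by
    simpa only [coeff_exp_mul_pow, Real.exp_eq_exp_ℝ] using
      (NormedSpace.expSeries_div_hasSum_exp y).tsum_eq
  have hcauchy := hasSum_coeff_mul_mul_pow hE (g := tanhSeries ℝ) (by simpa only [hT] using hS)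
  simp only [hexp, hT] at hcauchy
  set S := ∑' m, (tanhCoeff m : ℝ) * y ^ m
  have hconst : HasSum (fun m => coeff m (-2 : ℝ⟦X⟧) * y ^ m) (-2) := by
    rw [← map_ofNat C 2, ← map_neg]
    convert hasSum_single (f := fun m => coeff m (C (-2 : ℝ)) * y ^ m) 0 fun m hm => ?_
    · simp
    · simp [coeff_C, hm]
  have hrel : exp ℝ * tanhSeries ℝ = -2 - tanhSeries ℝ := by
    linear_combination exp_add_one_mul_tanhSeries ℝ
  have hformal : HasSum (fun m => coeff m (exp ℝ * tanhSeries ℝ) * y ^ m) (-2 - S) := by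
    simp only [hrel, map_sub, sub_mul, hT]
    exact hconst.sub hS.of_norm.hasSum
  have hS_eq : S = -2 / (Real.exp y + 1) := by
    rw [eq_div_iff (by positivity)]
    linarith [hcauchy.unique hformal]
  exact hS_eq ▸ hS.of_norm.hasSum

theorem Real.tanh_eq_one_sub_two_div_exp_add_one (x : ℝ) :
    tanh x = 1 - 2 / (exp (2 * x) + 1) := by
  rw [tanh_eq, two_mul, exp_add, exp_neg]
  field_simp
  ring

theorem hasSum_tanhCoeff_odd_mul_pow {y : ℝ} (hy : |y| < π) :
    HasSum (fun n => (tanhCoeff (2 * n + 1) : ℝ) * y ^ (2 * n + 1)) (tanh (y / 2)) := by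
  have h := (hasSum_nat_add_iff' 1).2 (hasSum_tanhCoeff_mul_pow hy)
  have ht : tanh (y / 2) = -2 / (Real.exp y + 1) - ((-1 : ℚ) : ℝ) * y ^ 0 := by
    rw [Real.tanh_eq_one_sub_two_div_exp_add_one, mul_div_cancel₀ y two_ne_zero]
    push_cast
    ring
  rw [Finset.sum_range_one, tanhCoeff_zero, ← ht] at h
  have hvanish : ∀ m ∉ Set.range (2 * ·), (tanhCoeff (m + 1) : ℝ) * y ^ (m + 1) = 0 := by
    intro m hm
    have hm_odd : Odd m := by
      rw [← Nat.not_even_iff_odd]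
      rintro ⟨k, rfl⟩
      exact hm ⟨k, two_mul k⟩
    rw [tanhCoeff_eq_zero hm_odd.add_one (by omega), Rat.cast_zero, zero_mul]
  exact ((mul_right_injective₀ two_ne_zero).hasSum_iff hvanish).2 h

theorem hasSum_bernoulli_tanh (x : ℝ) (hx : |x| < π / 2) :
    HasSum
      (fun n : ℕ =>
        2 * ((4 : ℝ) ^ (n + 1) - 1) * (bernoulli (2 * (n + 1)) : ℝ) *
          (2 * x) ^ (2 * (n + 1) - 1) / (Nat.factorial (2 * (n + 1)) : ℝ))
      (Real.tanh x) := by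
  have h := hasSum_tanhCoeff_odd_mul_pow (y := 2 * x) (by rw [abs_mul, abs_two]; linarith)
  rw [mul_div_cancel_left₀ x two_ne_zero] at h
  refine h.congr_fun fun n => ?_
  simp only [tanhCoeff, show 2 * n + 1 + 1 = 2 * (n + 1) by ring,
    show 2 * (n + 1) - 1 = 2 * n + 1 by omega, pow_mul]
  push_cast
  ring
end

section
/- For every natural number n, \(\sum_{k=0}^{n} \binom{6n+5}{6k+2} B_{6k+2} = \frac{6n+5}{3}\). -/
/-!
Let `N = 6n + 5` and let `ω` be a primitive sixth root of unity. Filtering the exponents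
`i ≡ 2 (mod 6)` with the characters `t ↦ ω^{(i+4)t}` gives
`6 ∑ₖ C(N,6k+2) B_{6k+2} = ∑ₜ ∑ᵢ C(N,i) Bᵢ ω^{(i+4)t}`. The inner sum is the reversed Bernoulli
polynomial `zᴺ B_N(1/z)` at `z = ωᵗ`, times `ω^{4t}`, and `ω^{4t + Nt} = (-1)ᵗ`, so the right side
is `∑ₜ (-1)ᵗ B_N(ω^{-t})`. Since `ω² = ω - 1`, the points `ω^{-t}` are `±1`, `-ω`, `1 - ω`,
`ω - 1`, `ω`: the last four form two pairs `(x, x + 1)` and `±1` are one step from `0`, so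
`B_N(x + 1) - B_N(x) = N x^{N-1}` together with `B_N(0) = 0` evaluates the alternating sum to `2N`.
-/

open Finset

namespace Polynomial

variable {A : Type*} [CommRing A] [Algebra ℚ A]

theorem aeval_bernoulli_one_add (N : ℕ) (x : A) :
    aeval (1 + x) (bernoulli N) = aeval x (bernoulli N) + N * x ^ (N - 1) := by
  simpa [aeval_comp] using congr(aeval x $(bernoulli_comp_one_add_X N))

theorem aeval_zero_bernoulli (N : ℕ) :
    aeval (0 : A) (bernoulli N) = algebraMap ℚ A (_root_.bernoulli N) := by
  rw [← coeff_zero_eq_aeval_zero', coeff_zero_eq_eval_zero, bernoulli_eval_zero]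

theorem sum_bernoulli_mul_choose_mul_pow (N : ℕ) {x y : A} (hxy : x * y = 1) :
    ∑ i ∈ range (N + 1), algebraMap ℚ A (_root_.bernoulli i * N.choose i) * x ^ i =
      x ^ N * aeval y (bernoulli N) := by
  rw [bernoulli, map_sum, mul_sum]
  refine sum_congr rfl fun i hi => ?_
  obtain ⟨j, rfl⟩ := Nat.exists_eq_add_of_le (Nat.lt_succ_iff.mp (mem_range.mp hi))
  rw [aeval_monomial, Nat.add_sub_cancel_left, pow_add]
  have hxy_pow : x ^ j * y ^ j = 1 := by rw [← mul_pow, hxy, one_pow]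
  linear_combination (-algebraMap ℚ A (_root_.bernoulli i * (i + j).choose i) * x ^ i) * hxy_pow

theorem sum_neg_one_pow_mul_aeval_bernoulli (n : ℕ) {ω : A} (hω : ω ^ 2 = ω - 1) :
    ∑ t ∈ range 6, (-1) ^ t * aeval (ω ^ (6 - t)) (bernoulli (6 * n + 5)) =
      2 * (6 * n + 5) := by
  set P : A → A := fun x => aeval x (bernoulli (6 * n + 5))
  have h3 : ω ^ 3 = -1 := by linear_combination (ω + 1) * hω
  have h4 : ω ^ 4 = -ω := by linear_combination ω * h3
  have h5 : ω ^ 5 = 1 - ω := by linear_combination ω ^ 2 * h3 - hω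
  have h6 : ω ^ 6 = 1 := by linear_combination (ω ^ 3 - 1) * h3
  have hEven : Even (6 * n + 4) := ⟨3 * n + 2, by ring⟩
  have hstep (x : A) : P (1 + x) = P x + (6 * n + 5) * x ^ (6 * n + 4) := by
    simpa using aeval_bernoulli_one_add (6 * n + 5) x
  have hP_zero : P 0 = 0 := by
    simp only [P, aeval_zero_bernoulli,
      bernoulli_eq_zero_of_odd (n := 6 * n + 5) ⟨3 * n + 2, by ring⟩ (by omega), map_zero]
  have hP_one : P 1 = 0 := by simpa [hP_zero] using hstep 0
  have hP_neg_one : P (-1) = -(6 * n + 5) := by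
    have h := hstep (-1)
    rw [add_neg_cancel, hP_zero, hEven.neg_one_pow] at h
    linear_combination -h
  have hP_one_sub : P (1 - ω) = P (-ω) - (6 * n + 5) * ω := by
    have h := hstep (-ω)
    rw [hEven.neg_pow, pow_add, pow_mul, h6, one_pow, one_mul, h4, ← sub_eq_add_neg] at h
    linear_combination h
  have hP_self : P ω = P (ω - 1) + (6 * n + 5) * (ω - 1) := by
    have h := hstep (ω - 1)
    rw [← hω, ← pow_mul, show 2 * (6 * n + 4) = 6 * (2 * n + 1) + 2 by ring, pow_add, pow_mul,
      h6, one_pow, one_mul, hω, add_sub_cancel] at h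
    linear_combination h
  simp only [sum_range_succ, sum_range_zero]
  norm_num [h6, h5, h4, h3, hω]
  linear_combination hP_one - hP_one_sub - hP_neg_one - hP_self

theorem sum_range_sum_bernoulli_mul_choose_mul_pow (n : ℕ) {ω : A} (hω : ω ^ 2 = ω - 1) :
    ∑ t ∈ range 6, ∑ i ∈ range (6 * n + 5 + 1),
        algebraMap ℚ A (_root_.bernoulli i * (6 * n + 5).choose i) * (ω ^ (i + 4)) ^ t =
      2 * (6 * n + 5) := by
  have h3 : ω ^ 3 = -1 := by linear_combination (ω + 1) * hω
  have h6 : ω ^ 6 = 1 := by linear_combination (ω ^ 3 - 1) * h3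
  rw [← sum_neg_one_pow_mul_aeval_bernoulli n hω]
  refine sum_congr rfl fun t ht => ?_
  have hinv : ω ^ t * ω ^ (6 - t) = 1 := by
    rw [← pow_add, Nat.add_sub_cancel' (mem_range.mp ht).le, h6]
  have hsign : ω ^ (4 * t) * (ω ^ t) ^ (6 * n + 5) = (-1) ^ t := by
    rw [← pow_mul, ← pow_add, show 4 * t + t * (6 * n + 5) = 6 * ((n + 1) * t) + 3 * t by ring,
      pow_add, pow_mul, h6, one_pow, one_mul, pow_mul, h3]
  calc ∑ i ∈ range (6 * n + 5 + 1),
        algebraMap ℚ A (_root_.bernoulli i * (6 * n + 5).choose i) * (ω ^ (i + 4)) ^ t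
      = ω ^ (4 * t) * ∑ i ∈ range (6 * n + 5 + 1),
          algebraMap ℚ A (_root_.bernoulli i * (6 * n + 5).choose i) * (ω ^ t) ^ i := by
        rw [mul_sum]; exact sum_congr rfl fun i _ => by ring
    _ = (-1) ^ t * aeval (ω ^ (6 - t)) (bernoulli (6 * n + 5)) := by
        rw [sum_bernoulli_mul_choose_mul_pow _ hinv, ← mul_assoc, hsign]

end Polynomial

namespace IsPrimitiveRoot

variable {R : Type*} [CommRing R] [IsDomain R] {ζ : R} {k : ℕ}

theorem geom_sum_pow_eq_ite (hζ : IsPrimitiveRoot ζ k) (j : ℕ) :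
    ∑ t ∈ range k, (ζ ^ j) ^ t = if k ∣ j then (k : R) else 0 := by
  split_ifs with hkj
  · simp [(hζ.pow_eq_one_iff_dvd j).mpr hkj]
  · have hne : ζ ^ j - 1 ≠ 0 := sub_ne_zero.mpr fun h => hkj ((hζ.pow_eq_one_iff_dvd j).mp h)
    have hk : (ζ ^ j) ^ k = 1 := by rw [← pow_mul, mul_comm, pow_mul, hζ.pow_eq_one, one_pow]
    have h := geom_sum_mul (ζ ^ j) k
    rw [hk, sub_self] at h
    exact (mul_eq_zero.mp h).resolve_right hne

theorem sum_range_sum_mul_pow_pow {ι : Type*} (hζ : IsPrimitiveRoot ζ k) (s : Finset ι)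
    (f : ι → R) (e : ι → ℕ) :
    ∑ t ∈ range k, ∑ i ∈ s, f i * (ζ ^ e i) ^ t = k * ∑ i ∈ s with k ∣ e i, f i := by
  rw [sum_comm, sum_filter, mul_sum]
  refine sum_congr rfl fun i _ => ?_
  rw [← mul_sum, hζ.geom_sum_pow_eq_ite]
  split_ifs <;> ring

theorem sq_eq_sub_one_of_six_right (hζ : IsPrimitiveRoot ζ 6) : ζ ^ 2 = ζ - 1 := by
  have h := hζ.isRoot_cyclotomic (by norm_num)
  simp only [Polynomial.cyclotomic_six, Polynomial.IsRoot.def, Polynomial.eval_add,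
    Polynomial.eval_sub, Polynomial.eval_pow, Polynomial.eval_X, Polynomial.eval_one] at h
  linear_combination h

end IsPrimitiveRoot

theorem sum_choose_bernoulli_6k_add_2 (n : ℕ) :
    ∑ k ∈ Finset.range (n + 1),
        (Nat.choose (6 * n + 5) (6 * k + 2) : ℚ) * bernoulli (6 * k + 2) =
      (6 * n + 5) / 3 := by
  obtain ⟨ω, hω⟩ : ∃ ω : ℂ, IsPrimitiveRoot ω 6 := ⟨_, Complex.isPrimitiveRoot_exp 6 (by norm_num)⟩
  have hfilter := hω.sum_range_sum_mul_pow_pow (range (6 * n + 5 + 1))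
    (fun i => algebraMap ℚ ℂ (bernoulli i * (6 * n + 5).choose i)) (· + 4)
  have hsupport :
      {i ∈ range (6 * n + 5 + 1) | 6 ∣ i + 4} = (range (n + 1)).image (6 * · + 2) := by
    ext i
    simp only [mem_filter, mem_range, mem_image]
    constructor
    · rintro ⟨hi, hdvd⟩
      exact ⟨(i - 2) / 6, by omega, by omega⟩
    · rintro ⟨k, hk, rfl⟩
      omega
  rw [Polynomial.sum_range_sum_bernoulli_mul_choose_mul_pow n hω.sq_eq_sub_one_of_six_right,
    hsupport, sum_image fun _ _ _ _ h => by omega] at hfilter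
  apply (algebraMap ℚ ℂ).injective
  simp only [map_sum, map_mul, map_natCast, map_div₀, map_add, map_ofNat] at hfilter ⊢
  simp_rw [mul_comm (Nat.cast _ : ℂ)]
  push_cast at hfilter
  linear_combination -hfilter / 6
end
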